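/- arXiv:1405.3096 — 2 statements merged into one kernel-verified Lean document; each statement's English description precedes it below -/
import Mathlib

section
/- Let R be an associative unital ℚ-algebra containing elements t and ∂ satisfying ∂t − t∂ = 1, and let M be a right R-module in which every element is annihilated by some power of t (i.e. for every m ∈ M there is N with m·t^N = 0). For an integer i let E_i = {m ∈ M : m·(t∂) = i·m}. Then E_0 = {m ∈ M : m·t = 0}, E_i = 0 for every integer i < 0, and M is the internal direct sum of the subgroups E_i over i ≥ 0: the E_i are independent and their sum is all of M. -/
open MulOpposite

namespace KashiwaraAux

variable {M : Type*} [AddCommGroup M] [Module ℚ M]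

/-- `pAux θ k = (θ - 0)·(θ - 1)⋯(θ - (k-1))`. -/
def pAux (θ : Module.End ℚ M) : ℕ → Module.End ℚ M
  | 0 => 1
  | (k + 1) => pAux θ k * (θ - (k : ℚ) • 1)

lemma pAux_comm (θ : Module.End ℚ M) (k : ℕ) : pAux θ k * θ = θ * pAux θ k := by
  induction k with
  | zero => simp [pAux]
  | succ k ih =>
    have h : (θ - (k : ℚ) • 1) * θ = θ * (θ - (k : ℚ) • 1) := by
      simp [sub_mul, mul_sub, smul_mul_assoc, mul_smul_comm]
    simp only [pAux]
    rw [mul_assoc, h, ← mul_assoc, ih, mul_assoc]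

lemma pAux_comm' (θ : Module.End ℚ M) (k : ℕ) (c : ℚ) :
    pAux θ k * (θ - c • 1) = (θ - c • 1) * pAux θ k := by
  simp only [mul_sub, sub_mul, pAux_comm, mul_smul_comm, smul_mul_assoc, mul_one, one_mul]

lemma pAux_eigen (θ : Module.End ℚ M) (c : ℚ) (m : M) (h : θ m = c • m) (k : ℕ) :
    pAux θ k m = (∏ j ∈ Finset.range k, (c - j)) • m := by
  induction k with
  | zero => simp [pAux]
  | succ k ih =>
    have h1 : (θ - (k : ℚ) • 1) m = (c - k) • m := by
      simp [LinearMap.sub_apply, h, sub_smul]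
    calc pAux θ (k + 1) m = pAux θ k ((θ - (k : ℚ) • 1) m) := rfl
      _ = (c - k) • pAux θ k m := by rw [h1, map_smul]
      _ = (∏ j ∈ Finset.range (k + 1), (c - j)) • m := by
          rw [ih, smul_smul, Finset.prod_range_succ, mul_comm]

lemma mem_of_pAux_eq_zero (θ : Module.End ℚ M) (S : AddSubgroup M)
    (hS : ∀ (k : ℕ) (v : M), θ v = (k : ℚ) • v → v ∈ S) :
    ∀ (N : ℕ) (m : M), pAux θ N m = 0 → m ∈ S := by
  intro N
  induction N with
  | zero =>
    intro m hm
    simp only [pAux, Module.End.one_apply] at hm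
    rw [hm]; exact S.zero_mem
  | succ N ih =>
    intro m hm
    set v := pAux θ N m with hv
    have hθv : θ v = (N : ℚ) • v := by
      have h1 : (θ - (N : ℚ) • 1) v = 0 := by
        calc (θ - (N : ℚ) • 1) v = ((θ - (N : ℚ) • 1) * pAux θ N) m := rfl
          _ = (pAux θ N * (θ - (N : ℚ) • 1)) m := by rw [pAux_comm']
          _ = 0 := hm
      have h2 : θ v - (N : ℚ) • v = 0 := by simpa using h1
      exact sub_eq_zero.mp h2
    set c := ∏ j ∈ Finset.range N, ((N : ℚ) - j) with hcdef
    have hc : c ≠ 0 := by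
      rw [hcdef]
      refine Finset.prod_ne_zero_iff.mpr fun j hj => sub_ne_zero.mpr ?_
      exact_mod_cast (Finset.mem_range.mp hj).ne'
    have hpv : pAux θ N v = c • v := pAux_eigen θ (N : ℚ) v hθv N
    have h2 : pAux θ N (m - c⁻¹ • v) = 0 := by
      rw [map_sub, map_smul, hpv, smul_smul, inv_mul_cancel₀ hc, one_smul, ← hv, sub_self]
    have h3 : m - c⁻¹ • v ∈ S := ih _ h2
    have h4 : c⁻¹ • v ∈ S := hS N _ (by rw [map_smul, hθv, smul_comm])
    have h5 : m = (m - c⁻¹ • v) + c⁻¹ • v := by abel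
    rw [h5]; exact S.add_mem h3 h4

end KashiwaraAux


open KashiwaraAux in
/-- **Kashiwara's equivalence for the smooth divisor `t = 0` (algebraic content).**
Let `R` be an associative unital `ℚ`-algebra containing elements `t` and `∂` (written `d`)
with `∂t − t∂ = 1`, and let `M` be a right `R`-module (modelled over `Rᵐᵒᵖ`) in which every
element is annihilated by some power of `t`.  For `i : ℤ` let `E i` be the additive subgroup
`{m : M | m · (t∂) = i • m}`.  Then `E 0 = {m | m · t = 0}`, `E i = 0` for `i < 0`, and `M`
is the internal direct sum of the subgroups `E i` over `i ≥ 0`: they are independent and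
their sum is all of `M`. -/
theorem stmt_1 (R : Type*) [Ring R] [Algebra ℚ R] (t d : R) (ht : d * t - t * d = 1)
    (M : Type*) [AddCommGroup M] [Module Rᵐᵒᵖ M]
    (htor : ∀ m : M, ∃ N : ℕ, op (t ^ N) • m = 0)
    (E : ℤ → AddSubgroup M)
    (hE : ∀ i : ℤ, (E i : Set M) = {m : M | op (t * d) • m = i • m}) :
    ((E 0 : Set M) = {m : M | op t • m = 0}) ∧
    (∀ i : ℤ, i < 0 → E i = ⊥) ∧
    iSupIndep (fun i : {i : ℤ // 0 ≤ i} => E i.1) ∧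
    (⨆ i : {i : ℤ // 0 ≤ i}, E i.1) = ⊤ := by
  letI : Module ℚ M := Module.compHom M (algebraMap ℚ Rᵐᵒᵖ)
  have hsc : ∀ (r : Rᵐᵒᵖ) (q : ℚ) (m : M), r • (q • m) = q • (r • m) := by
    intro r q m
    show r • ((algebraMap ℚ Rᵐᵒᵖ q) • m) = (algebraMap ℚ Rᵐᵒᵖ q) • (r • m)
    rw [← mul_smul, ← mul_smul, Algebra.commutes]
  let L : R → Module.End ℚ M := fun r =>
    { toFun := fun m => op r • m
      map_add' := fun x y => smul_add _ _ _
      map_smul' := fun q m => hsc (op r) q m }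
  have hLapp : ∀ (r : R) (m : M), L r m = op r • m := fun _ _ => rfl
  have hLmul : ∀ r s : R, L r * L s = L (s * r) := by
    intro r s; ext m
    show op r • (op s • m) = op (s * r) • m
    rw [← mul_smul, ← op_mul]
  set T := L t with hTdef
  set D := L d with hDdef
  set θ := L (t * d) with hθdef
  have hDT : D * T = θ := hLmul d t
  have hdt : d * t = t * d + 1 := by rw [← ht]; noncomm_ring
  have hTD : T * D = θ + 1 := by
    rw [hTdef, hDdef, hLmul t d, hdt]
    ext m
    show op (t * d + 1) • m = θ m + m
    rw [op_add, add_smul, op_one, one_smul]; rfl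
  have hθT : θ * T = T * θ - T := by
    calc θ * T = (D * T) * T := by rw [hDT]
      _ = D * (T * T) := by rw [mul_assoc]
      _ = T * θ - T := by
          have : T * θ = (T * D) * T := by rw [mul_assoc, hDT]
          rw [this, hTD, add_mul, one_mul, add_sub_cancel_right, ← mul_assoc, hDT]
  have hθTk : ∀ k : ℕ, θ * T ^ k = T ^ k * (θ - (k : ℚ) • 1) := by
    intro k
    induction k with
    | zero => simp
    | succ k ih =>
      have hcast : ((k + 1 : ℕ) : ℚ) • (1 : Module.End ℚ M) = (k : ℚ) • 1 + 1 := by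
        push_cast
        rw [add_smul, one_smul]
      calc θ * T ^ (k + 1) = (θ * T) * T ^ k := by rw [pow_succ', mul_assoc]
        _ = (T * θ) * T ^ k - T * T ^ k := by rw [hθT, sub_mul]
        _ = T * (T ^ k * (θ - (k : ℚ) • 1)) - T * T ^ k := by rw [mul_assoc, ih]
        _ = T ^ (k + 1) * (θ - ((k + 1 : ℕ) : ℚ) • 1) := by
            rw [hcast, ← mul_assoc, ← pow_succ', mul_sub, mul_sub, mul_add, mul_one,
              sub_add_eq_sub_sub]
  have hDkTk : ∀ k : ℕ, D ^ k * T ^ k = pAux θ k := by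
    intro k
    induction k with
    | zero => simp [pAux]
    | succ k ih =>
      calc D ^ (k + 1) * T ^ (k + 1) = (D ^ k * D) * (T * T ^ k) := by rw [pow_succ, pow_succ']
        _ = D ^ k * ((D * T) * T ^ k) := by noncomm_ring
        _ = D ^ k * (T ^ k * (θ - (k : ℚ) • 1)) := by rw [hDT, hθTk k]
        _ = (D ^ k * T ^ k) * (θ - (k : ℚ) • 1) := by rw [mul_assoc]
        _ = pAux θ (k + 1) := by rw [ih]; rfl
  have hTkm : ∀ (k : ℕ) (m : M), (T ^ k) m = op (t ^ k) • m := by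
    intro k
    induction k with
    | zero => intro m; simp
    | succ k ih =>
      intro m
      calc (T ^ (k + 1)) m = T ((T ^ k) m) := by rw [pow_succ', Module.End.mul_apply]
        _ = op t • (op (t ^ k) • m) := by rw [ih, hLapp]
        _ = op (t ^ (k + 1)) • m := by rw [← mul_smul, ← op_mul, ← pow_succ]
  have hEmem : ∀ (i : ℤ) (m : M), m ∈ E i ↔ θ m = (i : ℚ) • m := by
    intro i m
    have h1 : m ∈ E i ↔ op (t * d) • m = i • m := by
      rw [← SetLike.mem_coe, hE i]; rfl
    rw [h1, Int.cast_smul_eq_zsmul]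
    exact Iff.rfl
  have hp0 : ∀ m : M, ∃ N : ℕ, pAux θ N m = 0 := by
    intro m
    obtain ⟨N, hN⟩ := htor m
    exact ⟨N, by rw [← hDkTk, Module.End.mul_apply, hTkm, hN, map_zero]⟩
  have part2 : ∀ i : ℤ, i < 0 → E i = ⊥ := by
    intro i hi
    ext m
    simp only [AddSubgroup.mem_bot]
    constructor
    · intro hm
      have hθm := (hEmem i m).mp hm
      obtain ⟨N, hN⟩ := hp0 m
      have hprod := pAux_eigen θ (i : ℚ) m hθm N
      rw [hN] at hprod
      have hc : (∏ j ∈ Finset.range N, ((i : ℚ) - j)) ≠ 0 := by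
        refine Finset.prod_ne_zero_iff.mpr fun j hj => sub_ne_zero.mpr (ne_of_lt ?_)
        calc (i : ℚ) < 0 := by exact_mod_cast hi
          _ ≤ j := Nat.cast_nonneg j
      calc m = (∏ j ∈ Finset.range N, ((i : ℚ) - j))⁻¹ •
              ((∏ j ∈ Finset.range N, ((i : ℚ) - j)) • m) := (inv_smul_smul₀ hc m).symm
        _ = 0 := by rw [← hprod, smul_zero]
    · intro hm; rw [hm]; exact (E i).zero_mem
  have part1 : (E 0 : Set M) = {m : M | op t • m = 0} := by
    ext m
    simp only [Set.mem_setOf_eq, SetLike.mem_coe]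
    constructor
    · intro hm
      have h0 : θ m = 0 := by simpa using (hEmem 0 m).mp hm
      have hTm : T m ∈ E (-1) := by
        refine (hEmem (-1) (T m)).mpr ?_
        have h1 : θ (T m) = (θ * T) m := rfl
        rw [h1, hθT]
        simp [LinearMap.sub_apply, h0]
      rw [part2 (-1) (by norm_num)] at hTm
      exact AddSubgroup.mem_bot.mp hTm
    · intro hm
      refine (hEmem 0 m).mpr ?_
      have h1 : θ m = D (T m) := by rw [← hDT]; rfl
      rw [h1, hLapp t m, hm, map_zero]
      simp
  set S : AddSubgroup M := ⨆ i : {i : ℤ // 0 ≤ i}, E i.1 with hSdef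
  have hS : ∀ (k : ℕ) (v : M), θ v = (k : ℚ) • v → v ∈ S := by
    intro k v hv
    have h1 : v ∈ E (k : ℤ) := (hEmem (k : ℤ) v).mpr (by push_cast; exact hv)
    exact (le_iSup (fun i : {i : ℤ // 0 ≤ i} => E i.1) ⟨(k : ℤ), Int.natCast_nonneg k⟩) h1
  have part4 : S = ⊤ := by
    rw [AddSubgroup.eq_top_iff']
    intro m
    obtain ⟨N, hN⟩ := hp0 m
    exact mem_of_pAux_eq_zero θ S hS N m hN
  have hEsub : ∀ (k : ℤ) (x : M), x ∈ E k ↔ x ∈ Module.End.eigenspace θ (k : ℚ) := by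
    intro k x
    rw [hEmem k x, Module.End.mem_eigenspace_iff]
  have part3 : iSupIndep (fun i : {i : ℤ // 0 ≤ i} => E i.1) := by
    have hinj : Function.Injective (fun i : {i : ℤ // 0 ≤ i} => ((i.1 : ℚ))) := by
      intro a b hab
      apply Subtype.ext
      have h : ((a.1 : ℚ)) = (b.1 : ℚ) := hab
      exact_mod_cast h
    have hInd := (Module.End.eigenspaces_iSupIndep θ).comp hinj
    intro i
    rw [AddSubgroup.disjoint_def]
    intro x hx hx'
    have hx2 : x ∈ Module.End.eigenspace θ (i.1 : ℚ) := (hEsub i.1 x).mp hx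
    have hx'2 : x ∈ ⨆ j, ⨆ (_ : j ≠ i), Module.End.eigenspace θ (j.1 : ℚ) := by
      refine (iSup_le fun j => iSup_le fun hj => fun y hy => ?_ :
        (⨆ j, ⨆ (_ : j ≠ i), E j.1) ≤
          (⨆ j, ⨆ (_ : j ≠ i), Module.End.eigenspace θ (j.1 : ℚ)).toAddSubgroup) hx'
      exact le_iSup₂ (f := fun (j : {i : ℤ // 0 ≤ i}) (_ : j ≠ i) =>
        Module.End.eigenspace θ (j.1 : ℚ)) j hj ((hEsub j.1 y).mp hy)
    exact Submodule.disjoint_def.mp (hInd i) x hx2 hx'2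
  exact ⟨part1, part2, part3, part4⟩
end

section
/- Let R be an associative unital ℚ-algebra containing elements t and ∂ satisfying ∂t − t∂ = 1, and let M be a right R-module in which every element is annihilated by some power of t. For i ∈ ℤ let E_i = {m ∈ M : m·(t∂) = i·m}, and define V_k M = ⊕_{0 ≤ i ≤ k} E_i for k ≥ 0 and V_k M = 0 for k < 0. Then (V_k M)_{k∈ℤ} is an increasing exhaustive filtration of M by additive subgroups satisfying the Kashiwara–Malgrange axioms along t: V_kM · t ⊆ V_{k−1}M and V_kM · ∂ ⊆ V_{k+1}M for all k; V_kM · t = V_{k−1}M for all k ≤ 0; and the operator of right multiplication by t∂ − k annihilates the quotient V_kM / V_{k−1}M for every k (so the only eigenvalue of t∂ on the k-th graded piece is k, which lies in the interval (k−1, k]). -/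
set_option linter.unusedSectionVars false

open MulOpposite

section KMaux
variable (R : Type*) [Ring R] [Algebra ℚ R]
variable {M : Type*} [AddCommGroup M] [Module Rᵐᵒᵖ M]

/-- Action of a rational scalar through the algebra map. -/
noncomputable def rhoKM (q : ℚ) (m : M) : M := op (algebraMap ℚ R q) • m

variable {R}

lemma opsmulKM (x y : R) (m : M) : op (x * y) • m = op y • (op x • m) := by
  rw [op_mul, mul_smul]

lemma rhoKM_op (q : ℚ) (r : R) (m : M) :
    op r • rhoKM R q m = rhoKM R q (op r • m) := by
  unfold rhoKM
  rw [← opsmulKM, ← opsmulKM, Algebra.commutes]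

lemma rhoKM_rho (q q' : ℚ) (m : M) :
    rhoKM R q (rhoKM R q' m) = rhoKM R (q' * q) m := by
  unfold rhoKM
  rw [← opsmulKM, map_mul]

lemma rhoKM_one (m : M) : rhoKM R (1 : ℚ) m = m := by
  unfold rhoKM; rw [map_one, op_one, one_smul]

lemma rhoKM_intCast (n : ℤ) (m : M) : rhoKM R ((n : ℚ)) m = n • m := by
  unfold rhoKM
  rw [map_intCast, op_intCast, Int.cast_smul_eq_zsmul]

lemma rhoKM_zsmul (q : ℚ) (z : ℤ) (m : M) :
    rhoKM R q (z • m) = z • rhoKM R q m := smul_comm _ _ _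

lemma rhoKM_sub (q : ℚ) (m m' : M) :
    rhoKM R q (m - m') = rhoKM R q m - rhoKM R q m' := smul_sub _ _ _

lemma zsmul_cancelKM {z : ℤ} (hz : z ≠ 0) {m : M} (h : z • m = 0)
    (R : Type*) [Ring R] [Algebra ℚ R] [Module Rᵐᵒᵖ M] : m = 0 := by
  have : rhoKM R ((z:ℚ)⁻¹) (z • m) = m := by
    rw [← rhoKM_intCast (R := R) z m, rhoKM_rho, mul_inv_cancel₀ (by exact_mod_cast hz),
      rhoKM_one]
  rw [h] at this
  simpa [rhoKM] using this.symm

variable (t d : R)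

/-- The operator `m ↦ m·(t∂) - a•m`. -/
def fKM (a : ℤ) (m : M) : M := op (t * d) • m - a • m

/-- `PKM n a = fKM a ∘ fKM (a+1) ∘ ⋯ ∘ fKM (a+n-1)`. -/
def PKM : ℕ → ℤ → M → M
  | 0, _, m => m
  | (n+1), a, m => fKM t d a (PKM n (a+1) m)

/-- `cKM n b a = ∏_{j=0}^{n-1} (a - (b+j))`. -/
def cKM : ℕ → ℤ → ℤ → ℤ
  | 0, _, _ => 1
  | (n+1), b, a => (a - b) * cKM n (b+1) a

lemma cKM_ne_zero : ∀ (n : ℕ) (b a : ℤ), a < b → cKM n b a ≠ 0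
  | 0, _, _, _ => one_ne_zero
  | (n+1), b, a, h => by
      simp only [cKM]
      exact mul_ne_zero (by omega) (cKM_ne_zero n (b+1) a (by omega))

lemma fKM_sub (a : ℤ) (m m' : M) :
    fKM t d a (m - m') = fKM t d a m - fKM t d a m' := by
  simp only [fKM, smul_sub]; abel

lemma PKM_sub (n : ℕ) : ∀ (a : ℤ) (m m' : M),
    PKM t d n a (m - m') = PKM t d n a m - PKM t d n a m' := by
  induction n with
  | zero => intro a m m'; rfl
  | succ n ih => intro a m m'; simp only [PKM, ih (a+1) m m', fKM_sub]

lemma fKM_rho (a : ℤ) (q : ℚ) (m : M) :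
    fKM t d a (rhoKM R q m) = rhoKM R q (fKM t d a m) := by
  simp only [fKM, rhoKM_op, rhoKM_sub, rhoKM_zsmul]

lemma fKM_eigen {a' : ℤ} {m : M} (h : op (t * d) • m = a' • m) (b : ℤ) :
    fKM t d b m = (a' - b) • m := by
  simp only [fKM, h, sub_smul]

lemma PKM_eigen {a' : ℤ} {m : M} (h : op (t * d) • m = a' • m) :
    ∀ (n : ℕ) (b : ℤ), PKM t d n b m = cKM n b a' • m := by
  intro n
  induction n with
  | zero => intro b; exact (one_smul _ _).symm
  | succ n ih =>
      intro b
      have hz : op (t * d) • (cKM n (b+1) a' • m) = a' • (cKM n (b+1) a' • m) := by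
        rw [smul_comm, h, smul_comm]
      simp only [PKM, ih (b+1), fKM_eigen t d hz b, cKM, smul_smul]

variable {t d}
variable (ht : d * t - t * d = 1)
include ht

lemma tshiftKM (m : M) :
    op t • (op (t * d) • m) = op (t * d) • (op t • m) + op t • m := by
  have hdt : d * t = t * d + 1 := eq_add_of_sub_eq' ht
  rw [← opsmulKM]
  have h1 : (t * d) * t = t * (t * d) + t := by
    rw [mul_assoc, hdt, mul_add, mul_one]
  rw [h1, op_add, add_smul, opsmulKM]

lemma dshiftKM (m : M) :
    op (t * d) • (op d • m) = op d • (op (t * d) • m) + op d • m := by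
  have hdt : d * t = t * d + 1 := eq_add_of_sub_eq' ht
  rw [← opsmulKM]
  have h1 : d * (t * d) = (t * d) * d + d := by
    rw [← mul_assoc, hdt, add_mul, one_mul]
  rw [h1, op_add, add_smul, opsmulKM]

lemma fKM_tshift (a : ℤ) (m : M) :
    op t • fKM t d a m = fKM t d (a - 1) (op t • m) := by
  simp only [fKM, smul_sub, tshiftKM ht, smul_comm (op t), sub_smul, one_smul]
  abel

lemma PKM_tshift (n : ℕ) : ∀ (a : ℤ) (m : M),
    op t • PKM t d n a m = PKM t d n (a - 1) (op t • m) := by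
  induction n with
  | zero => intro a m; rfl
  | succ n ih =>
      intro a m
      have h1 := fKM_tshift ht a (PKM t d n (a+1) m)
      have h2 := ih (a+1) m
      simp only [PKM, h1, h2]
      norm_num

lemma torsion_killKM (N : ℕ) : ∀ (m : M), op (t ^ N) • m = 0 → PKM t d N 0 m = 0 := by
  induction N with
  | zero => intro m h; simpa [PKM] using h
  | succ N ih =>
      intro m h
      have h' : op (t ^ N) • (op t • m) = 0 := by
        rw [← opsmulKM, ← pow_succ']
        exact h
      have ihm := ih (op t • m) h'
      have hx : op t • PKM t d N 1 m = 0 := by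
        rw [PKM_tshift ht N 1 m]
        simpa using ihm
      have hθ : op (t * d) • PKM t d N 1 m = 0 := by
        rw [opsmulKM, hx, smul_zero]
      have : (0:ℤ) + 1 = 1 := by norm_num
      simp only [PKM, fKM, this, hθ, zero_smul, sub_zero]

end KMaux

section KMmain
variable {R : Type*} [Ring R] [Algebra ℚ R]
variable {M : Type*} [AddCommGroup M] [Module Rᵐᵒᵖ M]
variable {t d : R} (ht : d * t - t * d = 1)
include ht

lemma decompKM (E : ℤ → AddSubgroup M)
    (hE : ∀ i : ℤ, (E i : Set M) = {m : M | op (t * d) • m = i • m})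
    (N : ℕ) : ∀ (a : ℤ) (m : M), PKM t d N a m = 0 →
      m ∈ ⨆ i ∈ Set.Icc a (a + (N : ℤ) - 1), E i := by
  induction N with
  | zero =>
      intro a m h
      have hm : m = 0 := h
      rw [hm]; exact zero_mem _
  | succ N ih =>
      intro a m h
      set x := PKM t d N (a+1) m with hx
      have hθx : op (t*d) • x = a • x := by
        have h' : fKM t d a x = 0 := h
        rw [fKM, sub_eq_zero] at h'
        exact h'
      set c := cKM N (a+1) a with hc
      have hcz : (c:ℚ) ≠ 0 := by
        exact_mod_cast cKM_ne_zero N (a+1) a (by omega)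
      set y := rhoKM R ((c:ℚ)⁻¹) x with hy
      have hθy : op (t*d) • y = a • y := by
        rw [hy, rhoKM_op, hθx, rhoKM_zsmul]
      have hymem : y ∈ E a := by
        rw [← SetLike.mem_coe, hE]
        exact hθy
      have hcy : c • y = x := by
        rw [hy, ← rhoKM_intCast (R := R) c, rhoKM_rho,
          inv_mul_cancel₀ hcz, rhoKM_one]
      have hdiff : PKM t d N (a+1) (m - y) = 0 := by
        rw [PKM_sub, ← hx, PKM_eigen t d hθy N (a+1), ← hc, hcy, sub_self]
      have hmem2 := ih (a+1) (m - y) hdiff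
      have hsub : (⨆ i ∈ Set.Icc (a+1) (a+1+(N:ℤ)-1), E i) ≤
          ⨆ i ∈ Set.Icc a (a + ((N+1 : ℕ) : ℤ) - 1), E i := by
        apply biSup_mono
        intro i hi
        simp only [Set.mem_Icc] at *
        push_cast
        omega
      have h1 : y ∈ ⨆ i ∈ Set.Icc a (a + ((N+1 : ℕ) : ℤ) - 1), E i := by
        have hle : E a ≤ _ := le_iSup₂ (f := fun i (_ : i ∈ Set.Icc a (a + ((N+1 : ℕ) : ℤ) - 1)) => E i) a
          (by simp only [Set.mem_Icc]; push_cast; omega)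
        exact hle hymem
      have : m = y + (m - y) := by abel
      rw [this]
      exact add_mem h1 (hsub hmem2)

end KMmain


/-- **The Kashiwara–Malgrange filtration of a module supported on `t = 0`.**
Let `R` be an associative unital `ℚ`-algebra with elements `t`, `∂` (written `d`) satisfying
`∂t − t∂ = 1`, and let `M` be a right `R`-module (modelled over `Rᵐᵒᵖ`) in which every element
is annihilated by some power of `t`.  For `i : ℤ` let `E i = {m | m·(t∂) = i • m}` and define
`V k = ⊕_{0 ≤ i ≤ k} E i` for `k ≥ 0` and `V k = 0` for `k < 0`.  Then `V` is an increasing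
exhaustive filtration of `M` by additive subgroups satisfying the Kashiwara–Malgrange axioms
along `t`: `V k · t ⊆ V (k−1)` and `V k · ∂ ⊆ V (k+1)` for all `k`; `V k · t = V (k−1)` for
all `k ≤ 0`; and right multiplication by `t∂ − k` annihilates `V k / V (k−1)` for every `k`
(stated elementwise: `m·(t∂) − k•m ∈ V (k−1)` for `m ∈ V k`). -/
theorem stmt_2 (R : Type*) [Ring R] [Algebra ℚ R] (t d : R) (ht : d * t - t * d = 1)
    (M : Type*) [AddCommGroup M] [Module Rᵐᵒᵖ M]
    (htor : ∀ m : M, ∃ N : ℕ, op (t ^ N) • m = 0)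
    (E : ℤ → AddSubgroup M)
    (hE : ∀ i : ℤ, (E i : Set M) = {m : M | op (t * d) • m = i • m})
    (V : ℤ → AddSubgroup M)
    (hV : ∀ k : ℤ, V k = if k < 0 then ⊥ else ⨆ i ∈ Set.Icc (0 : ℤ) k, E i) :
    Monotone V ∧
    (⨆ k : ℤ, V k) = ⊤ ∧
    (∀ k : ℤ, ∀ m ∈ V k, op t • m ∈ V (k - 1)) ∧
    (∀ k : ℤ, ∀ m ∈ V k, op d • m ∈ V (k + 1)) ∧
    (∀ k : ℤ, k ≤ 0 →
      AddSubgroup.map (DistribMulAction.toAddMonoidHom M (op t)) (V k) = V (k - 1)) ∧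
    (∀ k : ℤ, ∀ m ∈ V k, op (t * d) • m - k • m ∈ V (k - 1)) := by
  have memE : ∀ (i : ℤ) (m : M), m ∈ E i ↔ op (t * d) • m = i • m := by
    intro i m
    rw [← SetLike.mem_coe, hE]
    exact Iff.rfl
  have hVneg : ∀ k : ℤ, k < 0 → V k = ⊥ := fun k hk => by rw [hV k, if_pos hk]
  have hVpos : ∀ k : ℤ, ¬k < 0 → V k = ⨆ i ∈ Set.Icc (0 : ℤ) k, E i :=
    fun k hk => by rw [hV k, if_neg hk]
  have Eneg : ∀ i : ℤ, i < 0 → ∀ m ∈ E i, m = 0 := by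
    intro i hi m hm
    obtain ⟨N, hN⟩ := htor m
    have h1 : PKM t d N 0 m = 0 := torsion_killKM ht N m hN
    have h2 : PKM t d N 0 m = cKM N 0 i • m := PKM_eigen t d ((memE i m).mp hm) N 0
    exact zsmul_cancelKM (cKM_ne_zero N 0 i hi) (h2.symm.trans h1) R
  have EmemV : ∀ i k : ℤ, 0 ≤ i → i ≤ k → E i ≤ V k := by
    intro i k h0 hik
    rw [hVpos k (by omega)]
    exact le_iSup₂ (f := fun i (_ : i ∈ Set.Icc (0:ℤ) k) => E i) i ⟨h0, hik⟩
  have hmono : Monotone V := by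
    intro k k' hkk'
    by_cases hk : k < 0
    · rw [hVneg k hk]; exact bot_le
    · rw [hVpos k hk, hVpos k' (by omega)]
      exact biSup_mono fun i hi => ⟨hi.1, le_trans hi.2 hkk'⟩
  -- action of t on eigenvectors
  have htE : ∀ (i : ℤ) (m : M), op (t * d) • m = i • m →
      op (t * d) • (op t • m) = (i - 1) • (op t • m) := by
    intro i m hm
    have hf : fKM t d i m = 0 := by rw [fKM, hm, sub_self]
    have h := fKM_tshift ht i m
    rw [hf, smul_zero] at h
    have h' : fKM t d (i - 1) (op t • m) = 0 := h.symm
    rw [fKM, sub_eq_zero] at h'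
    exact h'
  have htmap : ∀ i : ℤ, 0 ≤ i → ∀ k : ℤ, i ≤ k → ∀ m ∈ E i, op t • m ∈ V (k - 1) := by
    intro i h0 k hik m hm
    have h1 := htE i m ((memE i m).mp hm)
    rcases eq_or_lt_of_le h0 with h | h
    · have hz : op t • m = 0 := Eneg (i - 1) (by omega) _ ((memE _ _).mpr h1)
      rw [hz]; exact zero_mem _
    · exact EmemV (i - 1) (k - 1) (by omega) (by omega) ((memE _ _).mpr h1)
  have claim3 : ∀ k : ℤ, ∀ m ∈ V k, op t • m ∈ V (k - 1) := by
    intro k m hm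
    by_cases hk : k < 0
    · rw [hVneg k hk] at hm
      rw [AddSubgroup.mem_bot.mp hm, smul_zero]
      exact zero_mem _
    · rw [hVpos k hk] at hm
      have hle : (⨆ i ∈ Set.Icc (0:ℤ) k, E i) ≤
          AddSubgroup.comap (DistribMulAction.toAddMonoidHom M (op t)) (V (k - 1)) := by
        refine iSup₂_le ?_
        intro i hi
        intro m' hm'
        exact AddSubgroup.mem_comap.mpr (htmap i hi.1 k hi.2 m' hm')
      simpa using AddSubgroup.mem_comap.mp (hle hm)
  have hdE : ∀ (i : ℤ) (m : M), op (t * d) • m = i • m →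
      op (t * d) • (op d • m) = (i + 1) • (op d • m) := by
    intro i m hm
    rw [dshiftKM ht, hm, smul_comm (op d) i m, add_smul, one_smul]
  have claim4 : ∀ k : ℤ, ∀ m ∈ V k, op d • m ∈ V (k + 1) := by
    intro k m hm
    by_cases hk : k < 0
    · rw [hVneg k hk] at hm
      rw [AddSubgroup.mem_bot.mp hm, smul_zero]
      exact zero_mem _
    · rw [hVpos k hk] at hm
      have hle : (⨆ i ∈ Set.Icc (0:ℤ) k, E i) ≤
          AddSubgroup.comap (DistribMulAction.toAddMonoidHom M (op d)) (V (k + 1)) := by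
        refine iSup₂_le ?_
        intro i hi
        obtain ⟨hi1, hi2⟩ := hi
        intro m' hm'
        refine AddSubgroup.mem_comap.mpr ?_
        have h1 := hdE i m' ((memE i m').mp hm')
        exact EmemV (i + 1) (k + 1) (by omega) (by omega) ((memE _ _).mpr h1)
      simpa using AddSubgroup.mem_comap.mp (hle hm)
  have claim2 : (⨆ k : ℤ, V k) = ⊤ := by
    rw [AddSubgroup.eq_top_iff']
    intro m
    obtain ⟨N, hN⟩ := htor m
    have h1 : PKM t d N 0 m = 0 := torsion_killKM ht N m hN
    have h2 := decompKM ht E hE N 0 m h1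
    have h3 : m ∈ V (N : ℤ) := by
      rw [hVpos (N : ℤ) (by omega)]
      have hsub : (⨆ i ∈ Set.Icc (0:ℤ) (0 + (N:ℤ) - 1), E i) ≤
          ⨆ i ∈ Set.Icc (0:ℤ) (N:ℤ), E i := by
        apply biSup_mono
        intro i hi
        obtain ⟨hi1, hi2⟩ := hi
        exact ⟨hi1, by omega⟩
      exact hsub h2
    exact le_iSup V (N : ℤ) h3
  have claim5 : ∀ k : ℤ, k ≤ 0 →
      AddSubgroup.map (DistribMulAction.toAddMonoidHom M (op t)) (V k) = V (k - 1) := by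
    intro k hk
    rw [hVneg (k - 1) (by omega), eq_bot_iff]
    intro x hx
    rw [AddSubgroup.mem_map] at hx
    obtain ⟨m, hm, rfl⟩ := hx
    have h := claim3 k m hm
    rw [hVneg (k - 1) (by omega)] at h
    simpa using h
  have claim6 : ∀ k : ℤ, ∀ m ∈ V k, op (t * d) • m - k • m ∈ V (k - 1) := by
    intro k m hm
    by_cases hk : k < 0
    · rw [hVneg k hk] at hm
      rw [AddSubgroup.mem_bot.mp hm]
      simp only [smul_zero, sub_zero]
      exact zero_mem _
    · rw [hVpos k hk] at hm
      let g : M →+ M := AddMonoidHom.mk' (fun m => op (t * d) • m - k • m)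
        (by intro a b; simp only [smul_add]; abel)
      have hle : (⨆ i ∈ Set.Icc (0:ℤ) k, E i) ≤ AddSubgroup.comap g (V (k - 1)) := by
        refine iSup₂_le ?_
        intro i hi
        obtain ⟨hi1, hi2⟩ := hi
        intro m' hm'
        refine AddSubgroup.mem_comap.mpr ?_
        show op (t * d) • m' - k • m' ∈ V (k - 1)
        rw [(memE i m').mp hm', ← sub_smul]
        rcases eq_or_lt_of_le hi2 with h | h
        · rw [h, sub_self, zero_smul]
          exact zero_mem _
        · exact EmemV i (k - 1) hi1 (by omega) (zsmul_mem hm' _)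
      exact AddSubgroup.mem_comap.mp (hle hm)
  exact ⟨hmono, claim2, claim3, claim4, claim5, claim6⟩
end
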